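/- For an algebra Λ with global dimension at most 2, the double dual X** = Hom_Λ(Hom_Λ(X, Λ), Λ) of any finitely generated right Λ-module X is a projective Λ-module. -/
import Mathlib


/- STATEMENT 0: For a finite dimensional algebra `Λ` with global dimension at most 2, the
double dual `X** = Hom_Λ(Hom_Λ(X, Λ), Λ)` of any finitely generated right `Λ`-module `X`
is a projective `Λ`-module.
Right `Λ`-modules are `Λᵐᵒᵖ`-modules; `X* = X →ₗ[Λᵐᵒᵖ] Λ` is a left `Λ`-module and
`X** = X* →ₗ[Λ] Λ` is a right `Λ`-module.  "Global dimension ≤ 2" is expressed by the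
existence, for every (left or right) module, of a projective resolution of length ≤ 2. -/

open CategoryTheory

/-- Every `R`-module admits a projective resolution `0 → P₂ → P₁ → P₀ → M → 0`. -/
def GlobalDimLE2 (R : Type) [Ring R] : Prop :=
  ∀ M : ModuleCat.{0} R, ∃ (P0 P1 P2 : ModuleCat.{0} R)
    (d2 : P2 →ₗ[R] P1) (d1 : P1 →ₗ[R] P0) (d0 : P0 →ₗ[R] M),
    Module.Projective R P0 ∧ Module.Projective R P1 ∧ Module.Projective R P2 ∧
    Function.Injective d2 ∧ Function.Exact d2 d1 ∧ Function.Exact d1 d0 ∧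
    Function.Surjective d0

open Function LinearMap Submodule MulOpposite

section Dmap
variable {S T E : Type} [Ring S] [Ring T] [AddCommGroup E] [Module S E] [Module T E]
  [SMulCommClass S T E]
variable {A B X : Type} [AddCommGroup A] [Module S A] [AddCommGroup B] [Module S B]
  [AddCommGroup X] [Module S X]

/-- Dualization with respect to a bimodule `E`. -/
def dmap (g : A →ₗ[S] B) : (B →ₗ[S] E) →ₗ[T] (A →ₗ[S] E) where
  toFun φ := φ.comp g
  map_add' _ _ := rfl
  map_smul' _ _ := rfl

@[simp] lemma dmap_apply (g : A →ₗ[S] B) (φ : B →ₗ[S] E) : dmap (T := T) g φ = φ.comp g := rfl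

lemma dmap_injective {g : A →ₗ[S] B} (hg : Surjective g) :
    Injective (dmap (T := T) (E := E) g) := by
  intro φ ψ h
  ext b
  obtain ⟨a, rfl⟩ := hg b
  exact congrFun (congrArg (fun f : A →ₗ[S] E => (f : A → E)) h) a

lemma dmap_exact {f : A →ₗ[S] B} {g : B →ₗ[S] X} (hg : Surjective g)
    (hfg : range f = ker g) :
    range (dmap (T := T) (E := E) g) = ker (dmap (T := T) (E := E) f) := by
  apply le_antisymm
  · rintro _ ⟨φ, rfl⟩
    simp only [mem_ker, dmap_apply]
    ext a
    have : f a ∈ ker g := hfg ▸ mem_range_self f a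
    simp [mem_ker.mp this]
  · intro ψ hψ
    simp only [mem_ker, dmap_apply] at hψ
    have hker : ker g ≤ ker ψ := by
      rw [← hfg]
      rintro _ ⟨a, rfl⟩
      exact congrFun (congrArg (fun f : A →ₗ[S] E => (f : A → E)) hψ) a
    let q : (B ⧸ ker g) →ₗ[S] X := (ker g).liftQ g le_rfl
    have hqbij : Bijective q := by
      constructor
      · rw [← LinearMap.ker_eq_bot]
        exact Submodule.ker_liftQ_eq_bot _ _ _ le_rfl
      · intro x
        obtain ⟨b, rfl⟩ := hg x
        exact ⟨Submodule.Quotient.mk b, rfl⟩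
    let e := LinearEquiv.ofBijective q hqbij
    refine ⟨((ker g).liftQ ψ hker).comp (e.symm : X →ₗ[S] B ⧸ ker g), ?_⟩
    simp only [dmap_apply]
    ext b
    have he : e (Submodule.Quotient.mk b) = g b := rfl
    simp only [LinearMap.comp_apply, LinearEquiv.coe_coe]
    rw [← he, LinearEquiv.symm_apply_apply]
    exact Submodule.liftQ_apply _ _ _
end Dmap

section Schanuel
variable {R : Type} [Ring R]

theorem splitEquiv {L P KP : Type} [AddCommGroup L] [Module R L] [AddCommGroup P] [Module R P]
    [AddCommGroup KP] [Module R KP]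
    (p : L →ₗ[R] P) (ι : KP →ₗ[R] L) (hι : Injective ι)
    (hr : range ι = ker p)
    (s : P →ₗ[R] L) (hs : p ∘ₗ s = LinearMap.id) :
    Nonempty ((KP × P) ≃ₗ[R] L) := by
  have hps : ∀ x, p (s x) = x := fun x => congrFun (congrArg (fun f : P →ₗ[R] P => (f : P → P)) hs) x
  refine ⟨LinearEquiv.ofBijective (ι.coprod s) ⟨?_, ?_⟩⟩
  · rw [← LinearMap.ker_eq_bot, LinearMap.ker_eq_bot']
    rintro ⟨k, x⟩ h
    simp only [coprod_apply] at h
    have hk : ι k ∈ ker p := hr ▸ mem_range_self ι k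
    have hx : x = 0 := by
      have := congrArg p h
      simp only [map_add, map_zero, hps, mem_ker.mp hk, zero_add] at this
      exact this
    subst hx
    simp only [map_zero, add_zero] at h
    have : k = 0 := hι (by simpa using h)
    simp [this]
  · intro l
    have : l - s (p l) ∈ ker p := by simp [hps]
    rw [← hr] at this
    obtain ⟨k, hk⟩ := this
    exact ⟨(k, p l), by simp [coprod_apply, hk]⟩

theorem schanuel {Q P M KQ KP : Type} [AddCommGroup Q] [Module R Q] [AddCommGroup P] [Module R P]
    [AddCommGroup M] [Module R M] [AddCommGroup KQ] [Module R KQ] [AddCommGroup KP] [Module R KP]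
    [Module.Projective R Q] [Module.Projective R P]
    (f : Q →ₗ[R] M) (g : P →ₗ[R] M) (hf : Surjective f) (hg : Surjective g)
    (ιf : KQ →ₗ[R] Q) (hιf : Injective ιf) (hrf : range ιf = ker f)
    (ιg : KP →ₗ[R] P) (hιg : Injective ιg) (hrg : range ιg = ker g) :
    Nonempty ((KQ × P) ≃ₗ[R] (KP × Q)) := by
  set φ : Q × P →ₗ[R] M := f ∘ₗ fst R Q P - g ∘ₗ snd R Q P with hφ
  set L := ker φ with hL
  have memL : ∀ x : Q × P, x ∈ L ↔ f x.1 = g x.2 := by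
    intro x
    simp [hL, hφ, mem_ker, sub_eq_zero]
  let πP : ↥L →ₗ[R] P := (snd R Q P) ∘ₗ L.subtype
  let πQ : ↥L →ₗ[R] Q := (fst R Q P) ∘ₗ L.subtype
  have hπP : Surjective πP := by
    intro x
    obtain ⟨q, hq⟩ := hf (g x)
    exact ⟨⟨(q, x), (memL _).mpr hq⟩, rfl⟩
  have hπQ : Surjective πQ := by
    intro q
    obtain ⟨x, hx⟩ := hg (f q)
    exact ⟨⟨(q, x), (memL _).mpr hx.symm⟩, rfl⟩
  let jf : KQ →ₗ[R] ↥L := codRestrict L (LinearMap.prod ιf 0)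
    (fun k => (memL _).mpr (by simpa using mem_ker.mp (hrf ▸ mem_range_self ιf k)))
  have hjf : Injective jf := by
    intro a b h
    have := congrArg (fun z : ↥L => (z : Q × P).1) h
    exact hιf this
  have hrjf : range jf = ker πP := by
    ext x
    constructor
    · rintro ⟨k, rfl⟩; rfl
    · intro hx
      have hx2 : (x : Q × P).2 = 0 := hx
      have hx1 : (x : Q × P).1 ∈ ker f := by
        have := (memL _).mp x.2
        rw [hx2, map_zero] at this
        exact this
      rw [← hrf] at hx1
      obtain ⟨k, hk⟩ := hx1
      refine ⟨k, ?_⟩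
      apply Subtype.ext
      ext
      · exact hk
      · exact hx2.symm
  let jg : KP →ₗ[R] ↥L := codRestrict L (LinearMap.prod 0 ιg)
    (fun k => (memL _).mpr (by simpa using (mem_ker.mp (hrg ▸ mem_range_self ιg k)).symm))
  have hjg : Injective jg := by
    intro a b h
    have := congrArg (fun z : ↥L => (z : Q × P).2) h
    exact hιg this
  have hrjg : range jg = ker πQ := by
    ext x
    constructor
    · rintro ⟨k, rfl⟩; rfl
    · intro hx
      have hx1 : (x : Q × P).1 = 0 := hx
      have hx2 : (x : Q × P).2 ∈ ker g := by
        have := (memL _).mp x.2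
        rw [hx1, map_zero] at this
        exact this.symm
      rw [← hrg] at hx2
      obtain ⟨k, hk⟩ := hx2
      refine ⟨k, ?_⟩
      apply Subtype.ext
      ext
      · exact hx1.symm
      · exact hk
  obtain ⟨sP, hsP⟩ := Module.projective_lifting_property πP LinearMap.id hπP
  obtain ⟨sQ, hsQ⟩ := Module.projective_lifting_property πQ LinearMap.id hπQ
  obtain ⟨e1⟩ := splitEquiv πP jf hjf hrjf sP hsP
  obtain ⟨e2⟩ := splitEquiv πQ jg hjg hrjg sQ hsQ
  exact ⟨e1.trans e2.symm⟩

theorem projective_prod {A B : Type} [AddCommGroup A] [Module R A] [AddCommGroup B] [Module R B]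
    [Module.Projective R A] [Module.Projective R B] : Module.Projective R (A × B) := by
  obtain ⟨sA, hsA⟩ := Module.projective_lifting_property
    (Finsupp.linearCombination R (id : A → A)) LinearMap.id
    (fun a => ⟨Finsupp.single a 1, by simp⟩)
  obtain ⟨sB, hsB⟩ := Module.projective_lifting_property
    (Finsupp.linearCombination R (id : B → B)) LinearMap.id
    (fun b => ⟨Finsupp.single b 1, by simp⟩)
  have hA : ∀ x, Finsupp.linearCombination R (id : A → A) (sA x) = x :=
    fun x => congrFun (congrArg (fun f : A →ₗ[R] A => (f : A → A)) hsA) x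
  have hB : ∀ x, Finsupp.linearCombination R (id : B → B) (sB x) = x :=
    fun x => congrFun (congrArg (fun f : B →ₗ[R] B => (f : B → B)) hsB) x
  refine Module.Projective.of_split (M := (A →₀ R) × (B →₀ R))
    (prodMap sA sB)
    (prodMap (Finsupp.linearCombination R (id : A → A)) (Finsupp.linearCombination R (id : B → B)))
    ?_
  apply LinearMap.ext
  rintro ⟨x, y⟩
  simp only [LinearMap.comp_apply, prodMap_apply, Prod.map_apply, LinearMap.id_apply]
  exact Prod.ext (hA x) (hB y)

/-- If `0 → K → Q1 → Q0 → C → 0` is exact with `Q1, Q0` projective and `C` admits a projective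
resolution of length 2, then `K` is projective. -/
theorem proj_of_second_syzygy
    {K Q1 Q0 C P0 P1 P2 : Type}
    [AddCommGroup K] [Module R K] [AddCommGroup Q1] [Module R Q1]
    [AddCommGroup Q0] [Module R Q0] [AddCommGroup C] [Module R C]
    [AddCommGroup P0] [Module R P0] [AddCommGroup P1] [Module R P1]
    [AddCommGroup P2] [Module R P2]
    [Module.Projective R Q1] [Module.Projective R Q0]
    (hP0 : Module.Projective R P0) (hP1 : Module.Projective R P1) (hP2 : Module.Projective R P2)
    (ι : K →ₗ[R] Q1) (δ : Q1 →ₗ[R] Q0) (ε : Q0 →ₗ[R] C)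
    (hι : Injective ι) (hrι : range ι = ker δ) (hrδ : range δ = ker ε) (hε : Surjective ε)
    (d2 : P2 →ₗ[R] P1) (d1 : P1 →ₗ[R] P0) (d0 : P0 →ₗ[R] C)
    (hd2 : Injective d2) (hr2 : range d2 = ker d1) (hr1 : range d1 = ker d0)
    (hd0 : Surjective d0) :
    Module.Projective R K := by
  haveI := hP0; haveI := hP1; haveI := hP2
  have hsub : range ((range δ).subtype) = ker ε := by rw [Submodule.range_subtype]; exact hrδ
  have hsub' : range ((ker d0).subtype) = ker d0 := Submodule.range_subtype _
  obtain ⟨e0⟩ := schanuel ε d0 hε hd0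
    ((range δ).subtype) (Submodule.injective_subtype _) hsub
    ((ker d0).subtype) (Submodule.injective_subtype _) hsub'
  -- e0 : ↥(range δ) × P0 ≃ₗ[R] ↥(ker d0) × Q0
  let δ' : Q1 →ₗ[R] ↥(range δ) := codRestrict (range δ) δ (fun x => mem_range_self δ x)
  have hδ' : Surjective δ' := by
    rintro ⟨y, x, rfl⟩
    exact ⟨x, rfl⟩
  let a : (Q1 × P0) →ₗ[R] (↥(ker d0) × Q0) :=
    (e0 : (↥(range δ) × P0) →ₗ[R] (↥(ker d0) × Q0)) ∘ₗ prodMap δ' LinearMap.id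
  have ha : Surjective a := by
    apply Surjective.comp e0.surjective
    exact Surjective.prodMap hδ' surjective_id
  let ja : K →ₗ[R] Q1 × P0 := LinearMap.prod ι 0
  have hja : Injective ja := fun x y h => hι (congrArg Prod.fst h)
  have hrja : range ja = ker a := by
    have hker : ker a = ker (prodMap δ' (LinearMap.id : P0 →ₗ[R] P0)) := by
      rw [LinearMap.ker_comp, LinearEquiv.ker]
      rfl
    rw [hker]
    ext ⟨x, y⟩
    simp only [mem_ker, prodMap_apply, Prod.map_apply, LinearMap.id_apply, Prod.mk_eq_zero]
    constructor
    · rintro ⟨k, hk⟩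
      have h1 : ι k = x := congrArg Prod.fst hk
      have h2 : (0 : P0) = y := congrArg Prod.snd hk
      constructor
      · apply Subtype.ext
        have : δ x = 0 := by
          rw [← h1]
          exact mem_ker.mp (hrι ▸ mem_range_self ι k)
        simpa [δ'] using this
      · exact h2.symm
    · rintro ⟨h1, h2⟩
      have hx : x ∈ ker δ := by
        have := congrArg (Subtype.val) h1
        simpa [δ'] using this
      rw [← hrι] at hx
      obtain ⟨k, hk⟩ := hx
      exact ⟨k, by simp [ja, hk, h2]⟩
  let d1' : P1 →ₗ[R] ↥(ker d0) := codRestrict (ker d0) d1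
    (fun x => by rw [← hr1]; exact mem_range_self d1 x)
  have hd1' : Surjective d1' := by
    rintro ⟨y, hy⟩
    rw [← hr1] at hy
    obtain ⟨x, hx⟩ := hy
    exact ⟨x, Subtype.ext hx⟩
  let b : (P1 × Q0) →ₗ[R] (↥(ker d0) × Q0) := prodMap d1' LinearMap.id
  have hb : Surjective b := Surjective.prodMap hd1' surjective_id
  let jb : P2 →ₗ[R] P1 × Q0 := LinearMap.prod d2 0
  have hjb : Injective jb := fun x y h => hd2 (congrArg Prod.fst h)
  have hrjb : range jb = ker b := by
    ext ⟨x, y⟩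
    simp only [mem_ker, prodMap_apply, Prod.map_apply, LinearMap.id_apply, Prod.mk_eq_zero, b]
    constructor
    · rintro ⟨k, hk⟩
      have h1 : d2 k = x := congrArg Prod.fst hk
      have h2 : (0 : Q0) = y := congrArg Prod.snd hk
      constructor
      · apply Subtype.ext
        have : d1 x = 0 := by
          rw [← h1]
          exact mem_ker.mp (hr2 ▸ mem_range_self d2 k)
        simpa [d1'] using this
      · exact h2.symm
    · rintro ⟨h1, h2⟩
      have hx : x ∈ ker d1 := by
        have := congrArg (Subtype.val) h1
        simpa [d1'] using this
      rw [← hr2] at hx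
      obtain ⟨k, hk⟩ := hx
      exact ⟨k, by simp [jb, hk, h2]⟩
  haveI : Module.Projective R (Q1 × P0) := projective_prod
  haveI : Module.Projective R (P1 × Q0) := projective_prod
  obtain ⟨e⟩ := schanuel a b ha hb ja hja hrja jb hjb hrjb
  haveI : Module.Projective R (P2 × (Q1 × P0)) := projective_prod
  haveI : Module.Projective R (K × (P1 × Q0)) := Module.Projective.of_equiv e.symm
  exact Module.Projective.of_split (LinearMap.inl R K (P1 × Q0)) (LinearMap.fst R K (P1 × Q0))
    (by ext x <;> simp)

end Schanuel

section DualPi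
variable (Λ : Type) [Ring Λ]

/-- The dual of the free right module `(Λᵐᵒᵖ)^n` is the free left module `Λ^n`. -/
noncomputable def dualA (n : ℕ) : ((Fin n → Λᵐᵒᵖ) →ₗ[Λᵐᵒᵖ] Λ) ≃ₗ[Λ] (Fin n → Λ) where
  toFun φ := fun i => φ (Pi.single i 1)
  map_add' φ ψ := rfl
  map_smul' a φ := rfl
  invFun v :=
    { toFun := fun x => ∑ i, v i * (x i).unop
      map_add' := by
        intro x y
        simp [mul_add, Finset.sum_add_distrib]
      map_smul' := by
        intro c x
        simp only [Pi.smul_apply, smul_eq_mul, unop_mul, RingHom.id_apply]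
        rw [MulOpposite.smul_eq_mul_unop, Finset.sum_mul]
        exact Finset.sum_congr rfl fun i _ => (mul_assoc _ _ _).symm }
  left_inv := by
    intro φ
    apply LinearMap.ext
    intro x
    show ∑ i, φ (Pi.single i 1) * (x i).unop = φ x
    have hx : x = ∑ i, Pi.single i (x i) := (Finset.univ_sum_single x).symm
    conv_rhs => rw [hx]
    rw [map_sum]
    refine Finset.sum_congr rfl fun i _ => ?_
    have hsingle : Pi.single i (x i) = x i • (Pi.single i (1 : Λᵐᵒᵖ) : Fin n → Λᵐᵒᵖ) := by
      funext j
      by_cases hj : j = i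
      · subst hj
        simp
      · simp [Pi.single_eq_of_ne hj]
    rw [hsingle, map_smul, MulOpposite.smul_eq_mul_unop]
  right_inv := by
    intro v
    funext i
    show ∑ j, v j * ((Pi.single i (1 : Λᵐᵒᵖ) : Fin n → Λᵐᵒᵖ) j).unop = v i
    rw [Finset.sum_eq_single i]
    · simp
    · intro j _ hj
      simp [Pi.single_eq_of_ne hj]
    · intro h
      exact absurd (Finset.mem_univ i) h

/-- The dual of the free left module `Λ^N` is the free right module `(Λᵐᵒᵖ)^N`. -/
noncomputable def dualB (N : ℕ) : ((Fin N → Λ) →ₗ[Λ] Λ) ≃ₗ[Λᵐᵒᵖ] (Fin N → Λᵐᵒᵖ) where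
  toFun φ := fun i => op (φ (Pi.single i 1))
  map_add' φ ψ := by funext i; simp
  map_smul' c φ := by
    funext i
    show op ((c • φ) (Pi.single i 1)) = c * op (φ (Pi.single i 1))
    have : (c • φ) (Pi.single i 1) = c • (φ (Pi.single i 1)) := rfl
    rw [this, MulOpposite.smul_eq_mul_unop, op_mul, op_unop]
  invFun v :=
    { toFun := fun x => ∑ i, x i * (v i).unop
      map_add' := by
        intro x y
        simp [add_mul, Finset.sum_add_distrib]
      map_smul' := by
        intro a x
        simp only [Pi.smul_apply, smul_eq_mul, RingHom.id_apply]
        rw [Finset.mul_sum]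
        exact Finset.sum_congr rfl fun i _ => mul_assoc _ _ _ }
  left_inv := by
    intro φ
    apply LinearMap.ext
    intro x
    show ∑ i, x i * (op (φ (Pi.single i 1))).unop = φ x
    have hx : x = ∑ i, Pi.single i (x i) := (Finset.univ_sum_single x).symm
    conv_rhs => rw [hx]
    rw [map_sum]
    refine Finset.sum_congr rfl fun i _ => ?_
    have hsingle : Pi.single i (x i) = x i • (Pi.single i (1 : Λ) : Fin N → Λ) := by
      funext j
      by_cases hj : j = i
      · subst hj
        simp
      · simp [Pi.single_eq_of_ne hj]
    rw [hsingle, map_smul, unop_op, smul_eq_mul]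
  right_inv := by
    intro v
    funext i
    show op (∑ j, (Pi.single i (1 : Λ) : Fin N → Λ) j * (v j).unop) = v i
    rw [Finset.sum_eq_single i]
    · simp
    · intro j _ hj
      simp [Pi.single_eq_of_ne hj]
    · intro h
      exact absurd (Finset.mem_univ i) h

end DualPi

theorem stmt0 (K Λ : Type) [Field K] [Ring Λ] [Algebra K Λ] [FiniteDimensional K Λ]
    (hgl_right : GlobalDimLE2 Λᵐᵒᵖ) (hgl_left : GlobalDimLE2 Λ)
    (X : Type) [AddCommGroup X] [Module Λᵐᵒᵖ X] [Module.Finite Λᵐᵒᵖ X] :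
    Module.Projective Λᵐᵒᵖ ((X →ₗ[Λᵐᵒᵖ] Λ) →ₗ[Λ] Λ) := by
  classical
  -- Noetherian instances
  haveI : IsNoetherian K Λ := IsNoetherian.iff_fg.mpr inferInstance
  haveI : IsNoetherian K Λᵐᵒᵖ := isNoetherian_of_linearEquiv (opLinearEquiv K : Λ ≃ₗ[K] Λᵐᵒᵖ)
  haveI : IsNoetherianRing Λ := isNoetherian_of_tower K inferInstance
  haveI : IsNoetherianRing Λᵐᵒᵖ := isNoetherian_of_tower K inferInstance
  -- Finite free presentation of X
  obtain ⟨n, g, hg⟩ := Module.Finite.exists_fin' Λᵐᵒᵖ X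
  obtain ⟨m, h, hh⟩ := Module.Finite.exists_fin' Λᵐᵒᵖ ↥(ker g)
  let f : (Fin m → Λᵐᵒᵖ) →ₗ[Λᵐᵒᵖ] (Fin n → Λᵐᵒᵖ) := (ker g).subtype ∘ₗ h
  have hrf : range f = ker g := by
    rw [LinearMap.range_comp, LinearMap.range_eq_top.mpr hh, Submodule.map_top,
      Submodule.range_subtype]
  -- Dualize
  let gd := dmap (T := Λ) (E := Λ) g
  let fd := dmap (T := Λ) (E := Λ) f
  have hgd : Injective gd := dmap_injective hg
  have hex : range gd = ker fd := dmap_exact hg hrf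
  let S1 := range fd
  obtain ⟨P0, P1, P2, d2, d1, d0, hp0, hp1, hp2, hi2, he2, he1, hs0⟩ :=
    hgl_left (ModuleCat.of Λ (((Fin m → Λᵐᵒᵖ) →ₗ[Λᵐᵒᵖ] Λ) ⧸ S1))
  rw [LinearMap.exact_iff] at he2 he1
  haveI : Module.Projective Λ ((Fin n → Λᵐᵒᵖ) →ₗ[Λᵐᵒᵖ] Λ) :=
    Module.Projective.of_equiv (dualA Λ n).symm
  haveI : Module.Projective Λ ((Fin m → Λᵐᵒᵖ) →ₗ[Λᵐᵒᵖ] Λ) :=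
    Module.Projective.of_equiv (dualA Λ m).symm
  haveI hXstar : Module.Projective Λ (X →ₗ[Λᵐᵒᵖ] Λ) :=
    proj_of_second_syzygy hp0 hp1 hp2 gd fd S1.mkQ hgd hex (Submodule.ker_mkQ S1).symm
      S1.mkQ_surjective d2 d1 d0 hi2 he2.symm he1.symm hs0
  -- X* is finitely generated
  haveI : IsNoetherian Λ ((Fin n → Λᵐᵒᵖ) →ₗ[Λᵐᵒᵖ] Λ) := isNoetherian_of_linearEquiv (dualA Λ n).symm
  haveI : IsNoetherian Λ (X →ₗ[Λᵐᵒᵖ] Λ) := isNoetherian_of_injective gd hgd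
  -- double dual is a retract of a free module
  obtain ⟨N, p, s, hpN, hsN, hps⟩ :=
    Module.Finite.exists_comp_eq_id_of_projective Λ (X →ₗ[Λᵐᵒᵖ] Λ)
  haveI : Module.Projective Λᵐᵒᵖ ((Fin N → Λ) →ₗ[Λ] Λ) :=
    Module.Projective.of_equiv (dualB Λ N).symm
  refine Module.Projective.of_split (dmap (T := Λᵐᵒᵖ) (E := Λ) p)
    (dmap (T := Λᵐᵒᵖ) (E := Λ) s) ?_
  apply LinearMap.ext
  intro φ
  simp only [LinearMap.comp_apply, dmap_apply, LinearMap.id_apply]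
  rw [LinearMap.comp_assoc, hps, LinearMap.comp_id]
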